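/- arXiv:2406.01816 — 3 statements merged into one kernel-verified Lean document; each statement's English description precedes it below -/
import Mathlib

section
/- Let H be a complex Hilbert space. Every nonempty collection 𝒫 of partitions of H has a least upper bound in the refinement order on partitions of H. -/
/-!
Pool the cells of all the given partitions and link two of them when they are not orthogonal.
The closed spans of the connected components of this graph form a partition: cells in distinct
components are orthogonal, and each given partition already spans a dense subspace. It is the
least upper bound because a common coarsening puts each given cell inside one of its own cells,
and two non-orthogonal cells cannot sit in two different, hence orthogonal, cells of it; so each
component lies in a single cell.
-/

variable {H : Type*} [NormedAddCommGroup H] [InnerProductSpace ℂ H]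

/-- Two subspaces of a complex inner product space are orthogonal when every vector of
one is orthogonal to every vector of the other. -/
def Orth (p q : Submodule ℂ H) : Prop :=
  ∀ x ∈ p, ∀ y ∈ q, @inner ℂ H _ x y = 0

/-- A partition of `H` is a set of nonzero closed subspaces of `H` that are pairwise
orthogonal and whose supremum in the complete lattice of closed subspaces of `H`
(i.e. the topological closure of the submodule supremum) is all of `H`. -/
def IsPartition (P : Set (Submodule ℂ H)) : Prop :=
  (∀ p ∈ P, p ≠ ⊥) ∧
  (∀ p ∈ P, IsClosed (p : Set H)) ∧
  (∀ p ∈ P, ∀ q ∈ P, p ≠ q → Orth p q) ∧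
  (sSup P).topologicalClosure = ⊤

/-- `P₁` refines `P₂` when every cell of `P₁` is contained in some cell of `P₂`. -/
def Refines (P₁ P₂ : Set (Submodule ℂ H)) : Prop :=
  ∀ p ∈ P₁, ∃ q ∈ P₂, p ≤ q

/-- A multicell of a partition `P` is the supremum (in the lattice of closed subspaces)
of a possibly empty subset of `P`. -/
def IsMulticell (P : Set (Submodule ℂ H)) (m : Submodule ℂ H) : Prop :=
  ∃ C ⊆ P, m = (sSup C).topologicalClosure

theorem orth_iff_isOrtho {p q : Submodule ℂ H} : Orth p q ↔ p ⟂ q :=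
  Submodule.isOrtho_iff_inner_eq.symm

namespace Submodule.IsOrtho

variable {𝕜 E : Type*} [RCLike 𝕜] [NormedAddCommGroup E] [InnerProductSpace 𝕜 E]
  {U V : Submodule 𝕜 E}

theorem topologicalClosure_left (h : U ⟂ V) : U.topologicalClosure ⟂ V :=
  isOrtho_iff_le.mpr <| topologicalClosure_minimal _ h.le (isClosed_orthogonal V)

theorem topologicalClosure (h : U ⟂ V) : U.topologicalClosure ⟂ V.topologicalClosure :=
  (topologicalClosure_left (topologicalClosure_left h).symm).symm

end Submodule.IsOrtho

section Join

variable (S : Set (Submodule ℂ H))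

def Overlaps (a b : Submodule ℂ H) : Prop :=
  a ∈ S ∧ b ∈ S ∧ ¬ a ⟂ b

def overlapComponent (p : Submodule ℂ H) : Set (Submodule ℂ H) :=
  {r | r ∈ S ∧ Relation.ReflTransGen (Overlaps S) p r}

def joinPartition : Set (Submodule ℂ H) :=
  {q | ∃ p ∈ S, q = (sSup (overlapComponent S p)).topologicalClosure}

variable {S}

instance : Std.Symm (Overlaps S) :=
  ⟨fun _ _ ⟨ha, hb, hab⟩ => ⟨hb, ha, fun hba => hab hba.symm⟩⟩

theorem Relation.ReflTransGen.overlaps_symm {a b : Submodule ℂ H}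
    (h : Relation.ReflTransGen (Overlaps S) a b) : Relation.ReflTransGen (Overlaps S) b a :=
  Std.Symm.symm _ _ h

theorem overlapComponent_eq {p p' : Submodule ℂ H}
    (h : Relation.ReflTransGen (Overlaps S) p p') :
    overlapComponent S p = overlapComponent S p' := by
  ext r
  exact ⟨fun hr => ⟨hr.1, h.overlaps_symm.trans hr.2⟩,
    fun hr => ⟨hr.1, h.trans hr.2⟩⟩

theorem isOrtho_of_mem_overlapComponent {p p' r s : Submodule ℂ H}
    (h : ¬ Relation.ReflTransGen (Overlaps S) p p')
    (hr : r ∈ overlapComponent S p) (hs : s ∈ overlapComponent S p') : r ⟂ s := by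
  by_contra hrs
  exact h ((hr.2.tail ⟨hr.1, hs.1, hrs⟩).trans hs.2.overlaps_symm)

theorem le_topologicalClosure_sSup_overlapComponent {p : Submodule ℂ H} (hp : p ∈ S) :
    p ≤ (sSup (overlapComponent S p)).topologicalClosure :=
  (le_sSup (show p ∈ overlapComponent S p from ⟨hp, .refl⟩)).trans
    (Submodule.le_topologicalClosure _)

theorem isPartition_joinPartition (hS : ∀ p ∈ S, p ≠ ⊥)
    (hdense : (sSup S).topologicalClosure = ⊤) : IsPartition (joinPartition S) := by
  refine ⟨?_, ?_, ?_, ?_⟩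
  · rintro _ ⟨p, hp, rfl⟩ hbot
    exact hS p hp (le_bot_iff.mp (hbot ▸ le_topologicalClosure_sSup_overlapComponent hp))
  · rintro _ ⟨p, -, rfl⟩
    exact Submodule.isClosed_topologicalClosure _
  · rintro _ ⟨p, -, rfl⟩ _ ⟨p', -, rfl⟩ hne
    by_cases hpp' : Relation.ReflTransGen (Overlaps S) p p'
    · exact absurd (by rw [overlapComponent_eq hpp']) hne
    · refine orth_iff_isOrtho.mpr (Submodule.IsOrtho.topologicalClosure ?_)
      exact Submodule.isOrtho_sSup_left.mpr fun r hr => Submodule.isOrtho_sSup_right.mpr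
        fun s hs => isOrtho_of_mem_overlapComponent hpp' hr hs
  · have hle : sSup S ≤ sSup (joinPartition S) := sSup_le fun p hp =>
      (le_topologicalClosure_sSup_overlapComponent hp).trans (le_sSup ⟨p, hp, rfl⟩)
    exact top_unique (hdense ▸ Submodule.topologicalClosure_mono hle)

theorem refines_joinPartition {P : Set (Submodule ℂ H)} (hP : P ⊆ S) :
    Refines P (joinPartition S) :=
  fun p hp => ⟨_, ⟨p, hP hp, rfl⟩, le_topologicalClosure_sSup_overlapComponent (hP hp)⟩

theorem joinPartition_refines {Q : Set (Submodule ℂ H)} (hQ : IsPartition Q)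
    (hS : Refines S Q) : Refines (joinPartition S) Q := by
  rintro _ ⟨p, hp, rfl⟩
  obtain ⟨c, hcQ, hpc⟩ := hS p hp
  -- Crossing an overlap edge cannot leave `c`: distinct cells of `Q` are orthogonal.
  have hcomponent : ∀ r, Relation.ReflTransGen (Overlaps S) p r → r ≤ c := by
    intro r hr
    induction hr with
    | refl => exact hpc
    | @tail a r _ hedge ih =>
      obtain ⟨c', hc'Q, hrc'⟩ := hS r hedge.2.1
      obtain rfl | hcc' := eq_or_ne c c'
      · exact hrc'
      · exact absurd ((orth_iff_isOrtho.mp (hQ.2.2.1 c hcQ c' hc'Q hcc')).mono ih hrc')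
          hedge.2.2
  exact ⟨c, hcQ, Submodule.topologicalClosure_minimal _
    (sSup_le fun r hr => hcomponent r hr.2) (hQ.2.1 c hcQ)⟩

end Join

theorem exists_lub_of_partitions_general
    (Ps : Set (Set (Submodule ℂ H))) (hne : Ps.Nonempty) (h : ∀ P ∈ Ps, IsPartition P) :
    ∃ Q : Set (Submodule ℂ H), IsPartition Q ∧ (∀ P ∈ Ps, Refines P Q) ∧
      ∀ Q' : Set (Submodule ℂ H), IsPartition Q' → (∀ P ∈ Ps, Refines P Q') → Refines Q Q' := by
  obtain ⟨P₀, hP₀⟩ := hne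
  have hcells : ∀ p ∈ ⋃₀ Ps, p ≠ ⊥ := fun p ⟨P, hP, hp⟩ => (h P hP).1 p hp
  have hdense : (sSup (⋃₀ Ps)).topologicalClosure = ⊤ :=
    top_unique <| (h P₀ hP₀).2.2.2 ▸
      Submodule.topologicalClosure_mono (sSup_le_sSup (Set.subset_sUnion_of_mem hP₀))
  refine ⟨joinPartition (⋃₀ Ps), isPartition_joinPartition hcells hdense,
    fun P hP => refines_joinPartition (Set.subset_sUnion_of_mem hP), fun Q' hQ' hRef => ?_⟩
  exact joinPartition_refines hQ' fun p ⟨P, hP, hp⟩ => hRef P hP p hp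

/-- Let `H` be a complex Hilbert space. Every nonempty collection `Ps` of
partitions of `H` has a least upper bound in the refinement order on partitions of `H`. -/
theorem exists_lub_of_partitions [CompleteSpace H]
    (Ps : Set (Set (Submodule ℂ H))) (hne : Ps.Nonempty) (h : ∀ P ∈ Ps, IsPartition P) :
    ∃ Q : Set (Submodule ℂ H), IsPartition Q ∧ (∀ P ∈ Ps, Refines P Q) ∧
      ∀ Q' : Set (Submodule ℂ H), IsPartition Q' → (∀ P ∈ Ps, Refines P Q') → Refines Q Q' :=
  exists_lub_of_partitions_general Ps hne h
end

section
/- Let H be a nonzero finite-dimensional complex Hilbert space, let q be a nonzero closed subspace of H, and let P₁, P₂, … be a sequence of partitions of H. Then there exists a sequence of cells p₁, p₂, … with pᵢ ∈ Pᵢ for all i, such that pᵢ is not orthogonal to p_{i+1} for all i, and pᵢ is not orthogonal to q for all i. Moreover, for any positive integer n and any prescribed cell p ∈ Pₙ that is not orthogonal to q, such a sequence exists with pₙ = p. -/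
/-!
Given subspaces `c`, `q` with `⟪x, y⟫ ≠ 0` for some `x ∈ c`, `y ∈ q`, every partition `P` has a
cell orthogonal to neither: otherwise the set `A` of cells not orthogonal to `c` lies in `qᗮ`.
In a Hilbert space, two mutually orthogonal subspaces `U`, `V` with dense sum satisfy
`Vᗮ = Uᗮᗮ`, so `x ∈ (sSup (P \ A))ᗮ = (sSup A)ᗮᗮ`, while `y ∈ (sSup A)ᗮ`, forcing `⟪x, y⟫ = 0`.
Applied with `c` the current cell, this lets a sequence of cells not orthogonal to `q` be
extended one partition forwards or backwards, and hence through any prescribed cell.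
-/

variable {H : Type*} [NormedAddCommGroup H] [InnerProductSpace ℂ H]

theorem Submodule.IsOrtho.orthogonal_eq_orthogonal_orthogonal {𝕜 E : Type*} [RCLike 𝕜]
    [NormedAddCommGroup E] [InnerProductSpace 𝕜 E] [CompleteSpace E] {U V : Submodule 𝕜 E}
    (h : U ⟂ V) (hUV : (U ⊔ V)ᗮ = ⊥) : Vᗮ = Uᗮᗮ :=
  calc Vᗮ = (Uᗮᗮ ⊔ Uᗮ) ⊓ Vᗮ := by
        rw [sup_comm, Uᗮ.sup_orthogonal_of_hasOrthogonalProjection, top_inf_eq]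
    _ = Uᗮᗮ ⊔ Uᗮ ⊓ Vᗮ := sup_inf_assoc_of_le _ (orthogonal_le h.ge)
    _ = Uᗮᗮ := by rw [inf_orthogonal, hUV, sup_bot_eq]

theorem orth_comm {p q : Submodule ℂ H} : Orth p q ↔ Orth q p := by
  simp only [orth_iff_isOrtho, Submodule.isOrtho_comm]

theorem not_orth_self {q : Submodule ℂ H} (hq : q ≠ ⊥) : ¬ Orth q q := by
  obtain ⟨y, hy, hy0⟩ := Submodule.exists_mem_ne_zero_of_ne_bot hq
  exact fun h => hy0 (inner_self_eq_zero.mp (h y hy y hy))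

namespace IsPartition

variable [CompleteSpace H] {P : Set (Submodule ℂ H)}

theorem orthogonal_sSup_diff (hP : IsPartition P) {A : Set (Submodule ℂ H)} (hA : A ⊆ P) :
    (sSup (P \ A))ᗮ = (sSup A)ᗮᗮ := by
  have hortho : sSup A ⟂ sSup (P \ A) := by
    refine Submodule.isOrtho_sSup_left.2 fun u hu => Submodule.isOrtho_sSup_right.2 fun v hv => ?_
    exact orth_iff_isOrtho.1 (hP.2.2.1 u (hA hu) v hv.1 (ne_of_mem_of_not_mem hu hv.2))
  refine hortho.orthogonal_eq_orthogonal_orthogonal ?_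
  rw [← sSup_union, Set.union_sdiff_cancel hA]
  exact Submodule.topologicalClosure_eq_top_iff.1 hP.2.2.2

theorem exists_not_orth (hP : IsPartition P) {c q : Submodule ℂ H} (h : ¬ Orth c q) :
    ∃ p ∈ P, ¬ Orth p c ∧ ¬ Orth p q := by
  by_contra! hcontra
  set A := {p ∈ P | ¬ Orth p c}
  have hc : c ≤ (sSup (P \ A))ᗮ := Submodule.IsOrtho.ge <| Submodule.isOrtho_sSup_left.2
    fun p hp => orth_iff_isOrtho.1 (by_contra fun hpc => hp.2 ⟨hp.1, hpc⟩)
  have hq : q ≤ (sSup A)ᗮ := Submodule.IsOrtho.ge <| Submodule.isOrtho_sSup_left.2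
    fun p hp => orth_iff_isOrtho.1 (hcontra p hp.1 hp.2)
  rw [hP.orthogonal_sSup_diff (Set.sep_subset _ _)] at hc
  exact h (orth_iff_isOrtho.2 ((Submodule.isOrtho_orthogonal_left _).mono hc hq))

end IsPartition

section Chains

variable {α : Type*} {C : ℕ → Set α} {R : α → α → Prop}

theorem exists_chain_from (hfwd : ∀ i, ∀ a ∈ C i, ∃ b ∈ C (i + 1), R a b)
    {m : ℕ} {a : α} (ha : a ∈ C m) :
    ∃ g : ℕ → α, g 0 = a ∧ ∀ k, g k ∈ C (m + k) ∧ R (g k) (g (k + 1)) := by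
  choose! next hnext using hfwd
  let g : ℕ → α := fun k => Nat.rec a (fun k b => next (m + k) b) k
  have hg : ∀ k, g k ∈ C (m + k) := by
    intro k
    induction k with
    | zero => exact ha
    | succ k ih => exact (hnext _ _ ih).1
  exact ⟨g, rfl, fun k => ⟨hg k, (hnext _ _ (hg k)).2⟩⟩

theorem exists_chain_through (hfwd : ∀ i, ∀ a ∈ C i, ∃ b ∈ C (i + 1), R a b)
    (hbwd : ∀ i, ∀ b ∈ C (i + 1), ∃ a ∈ C i, R a b) (n : ℕ) {a : α} (ha : a ∈ C n) :
    ∃ f : ℕ → α, (∀ i, f i ∈ C i) ∧ (∀ i, R (f i) (f (i + 1))) ∧ f n = a := by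
  induction n generalizing a with
  | zero =>
    obtain ⟨g, hg0, hg⟩ := exists_chain_from hfwd ha
    exact ⟨g, fun i => by simpa using (hg i).1, fun i => (hg i).2, hg0⟩
  | succ n ih =>
    obtain ⟨b, hb, hba⟩ := hbwd n a ha
    obtain ⟨f, hfC, hfR, hfn⟩ := ih hb
    obtain ⟨g, hg0, hg⟩ := exists_chain_from hfwd ha
    refine ⟨fun i => if i ≤ n then f i else g (i - (n + 1)), fun i => ?_, fun i => ?_, ?_⟩
    · dsimp only
      split_ifs with hi
      · exact hfC i
      · simpa [Nat.add_sub_cancel' (not_le.1 hi)] using (hg (i - (n + 1))).1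
    · rcases lt_trichotomy i n with hi | rfl | hi
      · simpa [hi.le, Nat.succ_le_of_lt hi] using hfR i
      · simpa [hfn, hg0] using hba
      · have hk : i + 1 - (n + 1) = i - (n + 1) + 1 := by omega
        simpa [not_le.2 hi, not_le.2 (Nat.lt_succ_of_lt hi), hk] using (hg (i - (n + 1))).2
    · simp [hg0]

end Chains

theorem exists_cell_sequence_not_orth_general
    [FiniteDimensional ℂ H]
    (q : Submodule ℂ H) (hq : q ≠ ⊥)
    (P : ℕ → Set (Submodule ℂ H)) (hP : ∀ i, IsPartition (P i)) :
    (∃ p : ℕ → Submodule ℂ H, (∀ i, p i ∈ P i) ∧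
        (∀ i, ¬ Orth (p i) (p (i + 1))) ∧ ∀ i, ¬ Orth (p i) q) ∧
      ∀ n : ℕ, ∀ c ∈ P n, ¬ Orth c q →
        ∃ p : ℕ → Submodule ℂ H, (∀ i, p i ∈ P i) ∧
          (∀ i, ¬ Orth (p i) (p (i + 1))) ∧ (∀ i, ¬ Orth (p i) q) ∧ p n = c := by
  have hthrough : ∀ n : ℕ, ∀ c ∈ P n, ¬ Orth c q →
      ∃ p : ℕ → Submodule ℂ H, (∀ i, p i ∈ P i) ∧
        (∀ i, ¬ Orth (p i) (p (i + 1))) ∧ (∀ i, ¬ Orth (p i) q) ∧ p n = c := by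
    intro n c hc hcq
    obtain ⟨p, hpC, hpR, rfl⟩ := exists_chain_through (C := fun i => {p ∈ P i | ¬ Orth p q})
      (R := fun a b => ¬ Orth a b)
      (fun i a ha => by
        obtain ⟨b, hb, hba, hbq⟩ := (hP (i + 1)).exists_not_orth ha.2
        exact ⟨b, ⟨hb, hbq⟩, fun h => hba (orth_comm.1 h)⟩)
      (fun i b hb => by
        obtain ⟨a, ha, hab, haq⟩ := (hP i).exists_not_orth hb.2
        exact ⟨a, ⟨ha, haq⟩, hab⟩)
      n ⟨hc, hcq⟩
    exact ⟨p, fun i => (hpC i).1, hpR, fun i => (hpC i).2, rfl⟩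
  refine ⟨?_, hthrough⟩
  obtain ⟨c, hc, -, hcq⟩ := (hP 0).exists_not_orth (not_orth_self hq)
  obtain ⟨p, hpP, hpR, hpq, -⟩ := hthrough 0 c hc hcq
  exact ⟨p, hpP, hpR, hpq⟩

/-- Let `H` be a nonzero finite-dimensional complex Hilbert space, `q` a
nonzero closed subspace of `H`, and `P₀, P₁, …` a sequence of partitions of `H`.  Then there
is a sequence of cells `pᵢ ∈ Pᵢ` with consecutive cells not orthogonal and each `pᵢ` not
orthogonal to `q`; moreover, for any index `n` and prescribed cell `c ∈ Pₙ` not orthogonal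
to `q`, such a sequence exists with `pₙ = c`. -/
theorem exists_cell_sequence_not_orth
    [FiniteDimensional ℂ H] [Nontrivial H]
    (q : Submodule ℂ H) (hq : q ≠ ⊥) (hqc : IsClosed (q : Set H))
    (P : ℕ → Set (Submodule ℂ H)) (hP : ∀ i, IsPartition (P i)) :
    (∃ p : ℕ → Submodule ℂ H, (∀ i, p i ∈ P i) ∧
        (∀ i, ¬ Orth (p i) (p (i + 1))) ∧ ∀ i, ¬ Orth (p i) q) ∧
      ∀ n : ℕ, ∀ c ∈ P n, ¬ Orth c q →
        ∃ p : ℕ → Submodule ℂ H, (∀ i, p i ∈ P i) ∧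
          (∀ i, ¬ Orth (p i) (p (i + 1))) ∧ (∀ i, ¬ Orth (p i) q) ∧ p n = c :=
  exists_cell_sequence_not_orth_general q hq P hP
end

section
/- Let n be a positive integer and let A be a ℂ-linear subspace of the algebra of n×n complex matrices such that a·b* is a scalar multiple of the identity matrix for all a, b ∈ A, where b* denotes the conjugate transpose of b. Then either A = {0}, or A = ℂ·u for some unitary n×n matrix u. -/
/-!
For a nonzero `a ∈ A` the scalar `a aᴴ = l • 1` is positive, since `a aᴴ` is positive
semidefinite and nonzero; so `u = l^{-1/2} a ∈ A` is unitary. Then every `x ∈ A` equals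
`(x uᴴ) u`, a scalar multiple of `u`.
-/

open Matrix
open scoped ComplexOrder

section StarMonoid

variable {R B : Type*} [Monoid B] [Star B] [SMul R B] [IsScalarTower R B B]

theorem eq_smul_of_mul_star_eq_smul_one {x u : B} (hu : star u * u = 1) {μ : R}
    (h : x * star u = μ • 1) : x = μ • u :=
  calc x = x * star u * u := by rw [mul_assoc, hu, mul_one]
    _ = μ • u := by rw [h, smul_one_mul]

end StarMonoid

theorem Submodule.eq_span_singleton_of_mul_star_eq_smul_one {R B : Type*} [CommSemiring R]
    [Semiring B] [Star B] [Module R B] [IsScalarTower R B B] {A : Submodule R B} {u : B}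
    (huA : u ∈ A) (hu : star u * u = 1) (h : ∀ x ∈ A, ∃ μ : R, x * star u = μ • 1) :
    A = span R {u} := by
  refine le_antisymm (fun x hx => ?_) ((span_singleton_le_iff_mem u A).mpr huA)
  obtain ⟨μ, hμ⟩ := h x hx
  exact mem_span_singleton.mpr ⟨μ, (eq_smul_of_mul_star_eq_smul_one hu hμ).symm⟩

section RCLike

variable {𝕜 m : Type*} [RCLike 𝕜] [Fintype m] [DecidableEq m]

theorem Matrix.pos_of_mul_conjTranspose_eq_smul_one {n : Type*} [Fintype n] {a : Matrix m n 𝕜}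
    (ha : a ≠ 0) {l : 𝕜} (hl : a * aᴴ = l • 1) : 0 < l := by
  obtain ⟨i, -⟩ := Function.ne_iff.mp ha
  have hl_nonneg : 0 ≤ l := by
    simpa [hl] using (posSemidef_self_mul_conjTranspose a).diag_nonneg (i := i)
  refine hl_nonneg.lt_of_ne' fun hl_zero => ha ?_
  exact self_mul_conjTranspose_eq_zero.mp (by simpa [hl_zero] using hl)

theorem Matrix.exists_smul_mem_unitaryGroup_of_mul_conjTranspose_eq_smul_one {a : Matrix m m 𝕜}
    (ha : a ≠ 0) {l : 𝕜} (hl : a * aᴴ = l • 1) : ∃ c : 𝕜, c • a ∈ unitaryGroup m 𝕜 := by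
  obtain ⟨r, hr, rfl⟩ :=
    RCLike.pos_iff_exists_ofReal.mp (pos_of_mul_conjTranspose_eq_smul_one ha hl)
  set c : 𝕜 := RCLike.ofReal (√r)⁻¹
  have hc : c * star c * r = 1 := by
    simp only [c, RCLike.star_def, RCLike.conj_ofReal, ← RCLike.ofReal_mul, ← mul_inv,
      Real.mul_self_sqrt hr.le, inv_mul_cancel₀ hr.ne', RCLike.ofReal_one]
  refine ⟨c, mem_unitaryGroup_iff.mpr ?_⟩
  rw [star_eq_conjTranspose, conjTranspose_smul, smul_mul, Matrix.mul_smul, hl, smul_smul,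
    smul_smul, hc, one_smul]

end RCLike

theorem subspace_mul_conjTranspose_scalar_general
    (n : ℕ) (A : Submodule ℂ (Matrix (Fin n) (Fin n) ℂ))
    (hA : ∀ a ∈ A, ∀ b ∈ A, ∃ l : ℂ,
      a * b.conjTranspose = l • (1 : Matrix (Fin n) (Fin n) ℂ)) :
    A = ⊥ ∨ ∃ u : Matrix (Fin n) (Fin n) ℂ,
      u * u.conjTranspose = 1 ∧ u.conjTranspose * u = 1 ∧ A = Submodule.span ℂ {u} := by
  rcases eq_or_ne A ⊥ with hA_bot | hA_ne_bot
  · exact Or.inl hA_bot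
  obtain ⟨a, haA, ha0⟩ := (Submodule.ne_bot_iff A).mp hA_ne_bot
  obtain ⟨l, hl⟩ := hA a haA a haA
  obtain ⟨c, hu⟩ := exists_smul_mem_unitaryGroup_of_mul_conjTranspose_eq_smul_one ha0 hl
  have huA : c • a ∈ A := A.smul_mem c haA
  refine Or.inr ⟨c • a, mem_unitaryGroup_iff.mp hu, mem_unitaryGroup_iff'.mp hu, ?_⟩
  exact Submodule.eq_span_singleton_of_mul_star_eq_smul_one huA (mem_unitaryGroup_iff'.mp hu)
    fun x hx => hA x hx _ huA

/-- Let `n` be a positive integer and let `A` be a `ℂ`-linear subspace of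
the algebra of `n × n` complex matrices such that `a * bᴴ` is a scalar multiple of the
identity matrix for all `a, b ∈ A` (where `bᴴ` is the conjugate transpose of `b`).  Then
either `A = {0}`, or `A = ℂ • u` for some unitary `n × n` matrix `u`. -/
theorem subspace_mul_conjTranspose_scalar
    (n : ℕ) (hn : 0 < n) (A : Submodule ℂ (Matrix (Fin n) (Fin n) ℂ))
    (hA : ∀ a ∈ A, ∀ b ∈ A, ∃ l : ℂ,
      a * b.conjTranspose = l • (1 : Matrix (Fin n) (Fin n) ℂ)) :
    A = ⊥ ∨ ∃ u : Matrix (Fin n) (Fin n) ℂ,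
      u * u.conjTranspose = 1 ∧ u.conjTranspose * u = 1 ∧ A = Submodule.span ℂ {u} :=
  subspace_mul_conjTranspose_scalar_general n A hA
end
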